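/- Let $\hat{A}$ be a symmetric matrix with all eigenvalues in $[-1,1]$, let $\alpha > 0$, and let $X \in \mathbb{R}^{N\times d}$. Define the exact solution $H^* = \frac{1}{1+\alpha}\sum_{\ell=0}^{\infty}\left(\frac{\alpha}{1+\alpha}\right)^{\ell}\hat{A}^{\ell} X$ and the truncated approximation $H = \frac{1}{1+\alpha}\sum_{\ell=0}^{L}\left(\frac{\alpha}{1+\alpha}\right)^{\ell}\hat{A}^{\ell} X + \left(\frac{\alpha}{1+\alpha}\right)^{L+1}\hat{A}^{L} X$. Then $\|H - H^*\|_F \le \sum_{\ell=L+1}^{\infty} \frac{\alpha^{\ell}}{(1+\alpha)^{\ell+1}} \|\hat{A}^{\ell} - \hat{A}^{L}\|_2 \cdot \|X\|_F$, which is further bounded by $\left(\frac{\alpha}{1+\alpha}\right)^{L+1} \|X\|_F \cdot \max_{\ell \ge 1} \mu_{L, L+\ell}$, where $\mu_{L_1,L_2} = \max_{1\le i \le N} |\lambda_i(\hat{A})^{L_1} - \lambda_i(\hat{A})^{L_2}|$. -/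

import Mathlib

/-!
Since `1/(1+α) = 1 - q` with `q = α/(1+α)` and `∑_{ℓ>L} (1 - q) q^ℓ = q^{L+1}`, the correction
term `q^{L+1} Â^L X` can be spread over the discarded tail, giving
`H - H* = (∑_{ℓ>L} (1 - q) q^ℓ (Â^L - Â^ℓ)) X`. The Frobenius norm of `M X` is at most
`‖M‖₂ ‖X‖_F`, and by the continuous functional calculus `‖Â^ℓ - Â^L‖₂ ≤ maxᵢ |λᵢ^ℓ - λᵢ^L|`.
-/

open Matrix
open scoped Matrix.Norms.L2Operator

lemma hasSum_one_sub_mul_pow_add {q : ℝ} (hq₀ : 0 ≤ q) (hq₁ : q < 1) (n : ℕ) :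
    HasSum (fun ℓ ↦ (1 - q) * q ^ (n + ℓ)) (q ^ n) := by
  have := (hasSum_geometric_of_lt_one hq₀ hq₁).mul_left (q ^ n * (1 - q))
  rwa [mul_inv_cancel_right₀ (sub_pos.2 hq₁).ne',
    show (fun ℓ ↦ q ^ n * (1 - q) * q ^ ℓ) = fun ℓ ↦ (1 - q) * q ^ (n + ℓ) from
      funext fun ℓ ↦ by ring] at this

lemma one_sub_div_one_add_mul_pow {K : Type*} [Field K] {α : K} (hα : 1 + α ≠ 0) (k : ℕ) :
    (1 - α / (1 + α)) * (α / (1 + α)) ^ k = α ^ k / (1 + α) ^ (k + 1) := by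
  rw [div_pow, pow_succ]
  field_simp
  ring

lemma geometric_truncation_sub_tsum {E : Type*} [AddCommGroup E] [Module ℝ E]
    [TopologicalSpace E] [IsTopologicalAddGroup E] [ContinuousSMul ℝ E] [T2Space E]
    {q : ℝ} (hq₀ : 0 ≤ q) (hq₁ : q < 1) {B : ℕ → E} (hB : Summable fun ℓ ↦ q ^ ℓ • B ℓ)
    (L : ℕ) :
    (1 - q) • ∑ ℓ ∈ Finset.range (L + 1), q ^ ℓ • B ℓ + q ^ (L + 1) • B L
        - (1 - q) • ∑' ℓ, q ^ ℓ • B ℓ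
      = ∑' ℓ, ((1 - q) * q ^ (L + 1 + ℓ)) • (B L - B (L + 1 + ℓ)) := by
  have htail : HasSum (fun ℓ ↦ q ^ (L + 1 + ℓ) • B (L + 1 + ℓ))
      (∑' ℓ, q ^ (ℓ + (L + 1)) • B (ℓ + (L + 1))) := by
    simpa only [add_comm _ (L + 1)] using ((summable_nat_add_iff (L + 1)).2 hB).hasSum
  have hsum := ((hasSum_one_sub_mul_pow_add hq₀ hq₁ (L + 1)).smul_const (B L)).sub
    (htail.const_smul (1 - q))
  rw [← hB.sum_add_tsum_nat_add (L + 1)]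
  simp only [smul_sub, mul_smul] at hsum ⊢
  rw [hsum.tsum_eq, smul_add]
  abel

namespace Matrix

section FrobeniusBound

variable {m n p : Type*} [Fintype m] [Fintype n] [DecidableEq n] [Fintype p]

lemma sum_sq_mulVec_le (M : Matrix m n ℝ) (x : n → ℝ) :
    ∑ i, (M *ᵥ x) i ^ 2 ≤ ‖M‖ ^ 2 * ∑ j, x j ^ 2 := by
  have := pow_le_pow_left₀ (norm_nonneg _) (M.l2_opNorm_mulVec (WithLp.toLp 2 x)) 2
  simpa [mul_pow, EuclideanSpace.real_norm_sq_eq] using this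

lemma sqrt_sum_sq_mul_le (M : Matrix m n ℝ) (X : Matrix n p ℝ) :
    √(∑ i, ∑ k, (M * X) i k ^ 2) ≤ ‖M‖ * √(∑ i, ∑ k, X i k ^ 2) := by
  have hcols : ∑ i, ∑ k, (M * X) i k ^ 2 ≤ ‖M‖ ^ 2 * ∑ i, ∑ k, X i k ^ 2 := by
    rw [Finset.sum_comm, Finset.sum_comm (f := fun i k ↦ X i k ^ 2), Finset.mul_sum]
    exact Finset.sum_le_sum fun k _ ↦ by
      simpa [mulVec, dotProduct, mul_apply] using M.sum_sq_mulVec_le (fun j ↦ X j k)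
  calc √(∑ i, ∑ k, (M * X) i k ^ 2) ≤ √(‖M‖ ^ 2 * ∑ i, ∑ k, X i k ^ 2) :=
        Real.sqrt_le_sqrt hcols
    _ = ‖M‖ * √(∑ i, ∑ k, X i k ^ 2) := by
        rw [Real.sqrt_mul (by positivity), Real.sqrt_sq (norm_nonneg _)]

lemma sqrt_sum_sq_tsum_mul_le {D : ℕ → Matrix m n ℝ} (hD : Summable fun ℓ ↦ ‖D ℓ‖)
    (X : Matrix n p ℝ) :
    √(∑ i, ∑ k, (∑' ℓ, D ℓ * X) i k ^ 2) ≤ (∑' ℓ, ‖D ℓ‖) * √(∑ i, ∑ k, X i k ^ 2) := by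
  have hmul : ∑' ℓ, D ℓ * X = (∑' ℓ, D ℓ) * X :=
    (hD.of_norm.map_tsum (addMonoidHomMulRight X) (continuous_id.matrix_mul continuous_const)).symm
  rw [hmul]
  exact (sqrt_sum_sq_mul_le _ X).trans <|
    mul_le_mul_of_nonneg_right (norm_tsum_le_tsum_norm hD) (Real.sqrt_nonneg _)

end FrobeniusBound

namespace IsHermitian

variable {n : Type*} [Fintype n] [DecidableEq n] {A : Matrix n n ℝ}

lemma l2_opNorm_cfc_le (hA : A.IsHermitian) (f : ℝ → ℝ) {c : ℝ} (hc : 0 ≤ c)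
    (h : ∀ i, |f (hA.eigenvalues i)| ≤ c) : ‖cfc f A‖ ≤ c := by
  refine norm_cfc_le hc fun x hx ↦ ?_
  obtain ⟨i, rfl⟩ := hA.spectrum_real_eq_range_eigenvalues ▸ hx
  exact h i

lemma l2_opNorm_pow_le_one (hA : A.IsHermitian) (heig : ∀ i, |hA.eigenvalues i| ≤ 1) (k : ℕ) :
    ‖A ^ k‖ ≤ 1 := by
  have : IsSelfAdjoint A := hA.isSelfAdjoint
  rw [← cfc_pow_id (R := ℝ) A k]
  exact hA.l2_opNorm_cfc_le _ zero_le_one fun i ↦ by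
    rw [abs_pow]
    exact pow_le_one₀ (abs_nonneg _) (heig i)

lemma l2_opNorm_pow_sub_pow_le (hA : A.IsHermitian) (k j : ℕ) :
    ‖A ^ k - A ^ j‖ ≤ ⨆ i, |hA.eigenvalues i ^ k - hA.eigenvalues i ^ j| := by
  have : IsSelfAdjoint A := hA.isSelfAdjoint
  rw [← cfc_pow_id (R := ℝ) A k, ← cfc_pow_id (R := ℝ) A j,
    ← cfc_sub (fun x ↦ x ^ k) (fun x ↦ x ^ j)]
  exact hA.l2_opNorm_cfc_le _ (Real.iSup_nonneg fun _ ↦ abs_nonneg _) fun i ↦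
    le_ciSup (f := fun i ↦ |hA.eigenvalues i ^ k - hA.eigenvalues i ^ j|)
      (Set.finite_range _).bddAbove i

lemma iSup_abs_pow_sub_pow_le_two (hA : A.IsHermitian) (heig : ∀ i, |hA.eigenvalues i| ≤ 1)
    (k j : ℕ) : ⨆ i, |hA.eigenvalues i ^ k - hA.eigenvalues i ^ j| ≤ 2 :=
  Real.iSup_le (fun i ↦ (abs_sub _ _).trans <| by
    rw [abs_pow, abs_pow, ← one_add_one_eq_two]
    exact add_le_add (pow_le_one₀ (abs_nonneg _) (heig i)) (pow_le_one₀ (abs_nonneg _) (heig i)))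
    zero_le_two

lemma l2_opNorm_pow_add_sub_pow_le_iSup (hA : A.IsHermitian)
    (heig : ∀ i, |hA.eigenvalues i| ≤ 1) (L ℓ : ℕ) :
    ‖A ^ (L + 1 + ℓ) - A ^ L‖
      ≤ ⨆ ℓ' : ℕ, ⨆ i, |hA.eigenvalues i ^ L - hA.eigenvalues i ^ (L + ℓ' + 1)| := by
  rw [norm_sub_rev, show L + 1 + ℓ = L + ℓ + 1 by omega]
  exact (hA.l2_opNorm_pow_sub_pow_le _ _).trans <|
    le_ciSup (f := fun ℓ' ↦ ⨆ i, |hA.eigenvalues i ^ L - hA.eigenvalues i ^ (L + ℓ' + 1)|)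
      ⟨2, Set.forall_mem_range.2 fun _ ↦ hA.iSup_abs_pow_sub_pow_le_two heig _ _⟩ ℓ

lemma summable_geometric_smul_pow_mul (hA : A.IsHermitian) (heig : ∀ i, |hA.eigenvalues i| ≤ 1)
    {p : Type*} [Fintype p] [DecidableEq p] {q : ℝ} (hq₀ : 0 ≤ q) (hq₁ : q < 1) (X : Matrix n p ℝ) :
    Summable fun ℓ ↦ q ^ ℓ • (A ^ ℓ * X) :=
  .of_norm_bounded ((summable_geometric_of_lt_one hq₀ hq₁).mul_right ‖X‖) fun ℓ ↦ by
    rw [norm_smul, Real.norm_of_nonneg (by positivity)]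
    exact mul_le_mul_of_nonneg_left ((l2_opNorm_mul _ _).trans
      (mul_le_of_le_one_left (norm_nonneg _) (hA.l2_opNorm_pow_le_one heig ℓ))) (by positivity)

end IsHermitian

end Matrix

/-- Error bound for the truncated Neumann-series approximation of the feature
matrix.  `‖·‖` is the spectral (L2 operator) norm; the Frobenius norm is written
out as the square root of the sum of squared entries.  `μ L₁ L₂` is the
`(L₁,L₂)`-order maximum eigengap of the symmetric matrix `Â`. -/
theorem truncated_feature_error_bound (N d : ℕ) (α : ℝ) (hα : 0 < α)
    (Ahat : Matrix (Fin N) (Fin N) ℝ) (hA : Ahat.IsHermitian)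
    (heig : ∀ i, |hA.eigenvalues i| ≤ 1)
    (X : Matrix (Fin N) (Fin d) ℝ) (L : ℕ)
    (Hstar H : Matrix (Fin N) (Fin d) ℝ)
    (hHstar : Hstar = (1 / (1 + α)) • ∑' ℓ : ℕ, (α / (1 + α)) ^ ℓ • (Ahat ^ ℓ * X))
    (hH : H = (1 / (1 + α)) • ∑ ℓ ∈ Finset.range (L + 1), (α / (1 + α)) ^ ℓ • (Ahat ^ ℓ * X)
          + (α / (1 + α)) ^ (L + 1) • (Ahat ^ L * X))
    (μ : ℕ → ℕ → ℝ)
    (hμ : ∀ L₁ L₂, μ L₁ L₂ = ⨆ i : Fin N, |hA.eigenvalues i ^ L₁ - hA.eigenvalues i ^ L₂|) :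
    Real.sqrt (∑ i, ∑ k, (H i k - Hstar i k) ^ 2)
      ≤ (∑' ℓ : ℕ, α ^ (L + 1 + ℓ) / (1 + α) ^ (L + 1 + ℓ + 1) *
          ‖Ahat ^ (L + 1 + ℓ) - Ahat ^ L‖ * Real.sqrt (∑ i, ∑ k, (X i k) ^ 2))
    ∧ (∑' ℓ : ℕ, α ^ (L + 1 + ℓ) / (1 + α) ^ (L + 1 + ℓ + 1) *
          ‖Ahat ^ (L + 1 + ℓ) - Ahat ^ L‖ * Real.sqrt (∑ i, ∑ k, (X i k) ^ 2))
      ≤ (α / (1 + α)) ^ (L + 1) * Real.sqrt (∑ i, ∑ k, (X i k) ^ 2) *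
          ⨆ ℓ : ℕ, μ L (L + ℓ + 1) := by
  set q := α / (1 + α) with hq
  have hq₀ : 0 ≤ q := by positivity
  have hq₁ : q < 1 := (div_lt_one (by linarith)).2 (by linarith)
  have hcoef : 1 / (1 + α) = 1 - q := by rw [hq]; field_simp; ring
  set c : ℕ → ℝ := fun ℓ ↦ (1 - q) * q ^ (L + 1 + ℓ)
  have hc : ∀ ℓ, c ℓ = α ^ (L + 1 + ℓ) / (1 + α) ^ (L + 1 + ℓ + 1) := fun ℓ ↦
    one_sub_div_one_add_mul_pow (by positivity) _
  have hweights : HasSum c (q ^ (L + 1)) := hasSum_one_sub_mul_pow_add hq₀ hq₁ (L + 1)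
  set S := ⨆ ℓ : ℕ, μ L (L + ℓ + 1)
  set D : ℕ → Matrix (Fin N) (Fin N) ℝ := fun ℓ ↦ c ℓ • (Ahat ^ L - Ahat ^ (L + 1 + ℓ))
  have hnormD : ∀ ℓ, ‖D ℓ‖ = c ℓ * ‖Ahat ^ (L + 1 + ℓ) - Ahat ^ L‖ := fun ℓ ↦ by
    rw [norm_smul, Real.norm_of_nonneg (by positivity), norm_sub_rev]
  have hDS : ∀ ℓ, ‖D ℓ‖ ≤ c ℓ * S := fun ℓ ↦ by
    rw [hnormD]
    refine mul_le_mul_of_nonneg_left ?_ (by positivity)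
    simpa only [S, hμ] using hA.l2_opNorm_pow_add_sub_pow_le_iSup heig L ℓ
  have hDsum : Summable fun ℓ ↦ ‖D ℓ‖ :=
    (hweights.summable.mul_right S).of_nonneg_of_le (fun _ ↦ norm_nonneg _) hDS
  have hdiff : H - Hstar = ∑' ℓ, D ℓ * X := by
    rw [hH, hHstar, hcoef, geometric_truncation_sub_tsum hq₀ hq₁
      (hA.summable_geometric_smul_pow_mul heig hq₀ hq₁ X) L]
    congr 1 with ℓ
    rw [Matrix.smul_mul, Matrix.sub_mul]
  have hbound : ∑' ℓ : ℕ, α ^ (L + 1 + ℓ) / (1 + α) ^ (L + 1 + ℓ + 1) *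
      ‖Ahat ^ (L + 1 + ℓ) - Ahat ^ L‖ * Real.sqrt (∑ i, ∑ k, (X i k) ^ 2)
      = (∑' ℓ, ‖D ℓ‖) * Real.sqrt (∑ i, ∑ k, (X i k) ^ 2) := by
    simp only [← tsum_mul_right, hnormD, hc]
  refine ⟨?_, ?_⟩
  · simpa only [← Matrix.sub_apply, hdiff, hbound] using sqrt_sum_sq_tsum_mul_le hDsum X
  · calc _ = (∑' ℓ, ‖D ℓ‖) * Real.sqrt (∑ i, ∑ k, (X i k) ^ 2) := hbound
      _ ≤ (∑' ℓ, c ℓ * S) * Real.sqrt (∑ i, ∑ k, (X i k) ^ 2) := mul_le_mul_of_nonneg_right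
          (hDsum.tsum_le_tsum hDS (hweights.summable.mul_right S)) (Real.sqrt_nonneg _)
      _ = _ := by rw [tsum_mul_right, hweights.tsum_eq, mul_right_comm]
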